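/- arXiv:1811.02465 — 6 statements merged into one kernel-verified Lean document; each statement's English description precedes it below -/
import Mathlib

section
/- Let n, m be positive integers, let f : ℝⁿ → ℝⁿ, g : ℝⁿ → (ℝᵐ →L[ℝ] ℝⁿ), and u : ℝⁿ → ℝᵐ be arbitrary maps, and let V : ℝⁿ → ℝ be a differentiable positive definite function (V(0) = 0 and V(z) > 0 for all z ≠ 0). Let c > 0 and γ ∈ (0,1), and suppose that for every z ∈ ℝⁿ, ⟪∇V(z), f(z) + g(z)(u(z))⟫ + c·(V(z))^γ ≤ 0. Then every differentiable curve x : ℝ → ℝⁿ satisfying x'(t) = f(x(t)) + g(x(t))(u(x(t))) for all t ≥ 0 satisfies x(t) = 0 for all t ≥ (V(x(0)))^{1-γ} / (c(1-γ)). -/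
/-!
Along a solution, `W t = V (x t)` satisfies `W' ≤ -c W ^ γ` with `W ≥ 0`, so `W` is nonincreasing.
While `W > 0` the chain rule turns this into `(W ^ (1 - γ))' ≤ -c (1 - γ)`, so `W ^ (1 - γ)`,
which starts at `W 0 ^ (1 - γ)`, would be negative after the settling time
`T = W 0 ^ (1 - γ) / (c (1 - γ))`. Hence `W T = 0`, and `W` stays zero afterwards; positive
definiteness of `V` turns `V (x t) = 0` into `x t = 0`.
-/

open Real Set

theorem HasGradientAt.comp_hasDerivAt {E : Type*} [NormedAddCommGroup E] [InnerProductSpace ℝ E]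
    [CompleteSpace E] {V : E → ℝ} {V' : E} {x : ℝ → E} {x' : E} {t : ℝ}
    (hV : HasGradientAt V V' (x t)) (hx : HasDerivAt x x' t) :
    HasDerivAt (V ∘ x) (inner ℝ V' x') t := by
  simpa only [InnerProductSpace.toDual_apply_apply] using
    (hasGradientAt_iff_hasFDerivAt.mp hV).comp_hasDerivAt t hx

theorem rpow_sub_one_mul_le_of_le_neg_mul_rpow {w d c γ : ℝ} (hw : 0 < w) (hγ : γ < 1)
    (hd : d ≤ -c * w ^ γ) : d * (1 - γ) * w ^ (1 - γ - 1) ≤ -(c * (1 - γ)) :=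
  calc d * (1 - γ) * w ^ (1 - γ - 1)
      ≤ -c * w ^ γ * (1 - γ) * w ^ (1 - γ - 1) := by
        have := rpow_nonneg hw.le (1 - γ - 1)
        gcongr
    _ = -(c * (1 - γ)) * w ^ (γ + (1 - γ - 1)) := by rw [rpow_add hw]; ring
    _ = -(c * (1 - γ)) := by norm_num

section DifferentialInequality

variable {W W' : ℝ → ℝ} {D : Set ℝ} {c γ : ℝ}

theorem antitoneOn_of_hasDerivAt_le_neg_mul_rpow (hD : Convex ℝ D)
    (hW : ∀ t ∈ D, HasDerivAt W (W' t) t) (hW' : ∀ t ∈ D, W' t ≤ -c * W t ^ γ)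
    (hW_nonneg : ∀ t ∈ D, 0 ≤ W t) (hc : 0 ≤ c) : AntitoneOn W D :=
  antitoneOn_of_hasDerivWithinAt_nonpos hD
    (fun t ht => (hW t ht).continuousAt.continuousWithinAt)
    (fun t ht => (hW t (interior_subset ht)).hasDerivWithinAt)
    fun t ht => (hW' t (interior_subset ht)).trans <| by
      have := rpow_nonneg (hW_nonneg t (interior_subset ht)) γ
      nlinarith

theorem antitoneOn_rpow_add_mul_of_hasDerivAt_le_neg_mul_rpow (hD : Convex ℝ D)
    (hW : ∀ t ∈ D, HasDerivAt W (W' t) t) (hW' : ∀ t ∈ D, W' t ≤ -c * W t ^ γ)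
    (hW_pos : ∀ t ∈ D, 0 < W t) (hγ : γ < 1) :
    AntitoneOn (fun t => W t ^ (1 - γ) + c * (1 - γ) * t) D := by
  have hΦ : ∀ t ∈ D, HasDerivAt (fun t => W t ^ (1 - γ) + c * (1 - γ) * t)
      (W' t * (1 - γ) * W t ^ (1 - γ - 1) + c * (1 - γ)) t := fun t ht => by
    simpa only [mul_one] using ((hW t ht).rpow_const (Or.inl (hW_pos t ht).ne')).fun_add
      ((hasDerivAt_id' t).const_mul (c * (1 - γ)))
  refine antitoneOn_of_hasDerivWithinAt_nonpos hD
    (fun t ht => (hΦ t ht).continuousAt.continuousWithinAt)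
    (fun t ht => (hΦ t (interior_subset ht)).hasDerivWithinAt) fun t ht => ?_
  have := rpow_sub_one_mul_le_of_le_neg_mul_rpow (hW_pos t (interior_subset ht)) hγ
    (hW' t (interior_subset ht))
  linarith

theorem eq_zero_of_hasDerivAt_le_neg_mul_rpow
    (hW : ∀ t ∈ Ici (0 : ℝ), HasDerivAt W (W' t) t)
    (hW' : ∀ t ∈ Ici (0 : ℝ), W' t ≤ -c * W t ^ γ)
    (hW_nonneg : ∀ t ∈ Ici (0 : ℝ), 0 ≤ W t) (hc : 0 < c) (hγ : γ < 1) :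
    ∀ t, W 0 ^ (1 - γ) / (c * (1 - γ)) ≤ t → W t = 0 := by
  set T := W 0 ^ (1 - γ) / (c * (1 - γ))
  have hcγ : 0 < c * (1 - γ) := mul_pos hc (by linarith)
  have hT : 0 ≤ T := div_nonneg (rpow_nonneg (hW_nonneg 0 self_mem_Ici) _) hcγ.le
  have hanti := antitoneOn_of_hasDerivAt_le_neg_mul_rpow (convex_Ici 0) hW hW' hW_nonneg hc.le
  have hWT : W T = 0 := by
    by_contra hne
    have hWT_pos : 0 < W T := (hW_nonneg T hT).lt_of_ne' hne
    have hΦ := antitoneOn_rpow_add_mul_of_hasDerivAt_le_neg_mul_rpow (convex_Icc 0 T)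
      (fun t ht => hW t ht.1) (fun t ht => hW' t ht.1)
      (fun t ht => hWT_pos.trans_le (hanti ht.1 (ht.1.trans ht.2) ht.2)) hγ
      (left_mem_Icc.2 hT) (right_mem_Icc.2 hT) hT
    have hcT : c * (1 - γ) * T = W 0 ^ (1 - γ) := mul_div_cancel₀ _ hcγ.ne'
    have := rpow_pos_of_pos hWT_pos (1 - γ)
    simp only [hcT, mul_zero, add_zero] at hΦ
    linarith
  intro t ht
  exact le_antisymm (hWT ▸ hanti hT (hT.trans ht) ht) (hW_nonneg t (hT.trans ht))

end DifferentialInequality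

theorem finite_time_stability_general
    (n m : ℕ)
    (f : EuclideanSpace ℝ (Fin n) → EuclideanSpace ℝ (Fin n))
    (g : EuclideanSpace ℝ (Fin n) → (EuclideanSpace ℝ (Fin m) →L[ℝ] EuclideanSpace ℝ (Fin n)))
    (u : EuclideanSpace ℝ (Fin n) → EuclideanSpace ℝ (Fin m))
    (V : EuclideanSpace ℝ (Fin n) → ℝ)
    (hVdiff : Differentiable ℝ V)
    (hV0 : V 0 = 0)
    (hVpos : ∀ z : EuclideanSpace ℝ (Fin n), z ≠ 0 → 0 < V z)
    (c γ : ℝ) (hc : 0 < c) (hγ : γ ∈ Set.Ioo (0 : ℝ) 1)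
    (hdecr : ∀ z : EuclideanSpace ℝ (Fin n),
      (inner ℝ (gradient V z) (f z + g z (u z)) : ℝ) + c * (V z) ^ γ ≤ 0)
    (x : ℝ → EuclideanSpace ℝ (Fin n)) (hx : Differentiable ℝ x)
    (hode : ∀ t : ℝ, 0 ≤ t → deriv x t = f (x t) + g (x t) (u (x t))) :
    ∀ t : ℝ, (V (x 0)) ^ (1 - γ) / (c * (1 - γ)) ≤ t → x t = 0 := by
  have hV_nonneg : ∀ z, 0 ≤ V z := fun z =>
    (eq_or_ne z 0).elim (fun hz => hz ▸ hV0.ge) fun hz => (hVpos z hz).le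
  have hVx : ∀ t ∈ Ici (0 : ℝ), HasDerivAt (V ∘ x)
      (inner ℝ (gradient V (x t)) (f (x t) + g (x t) (u (x t)))) t := fun t ht => by
    rw [← hode t ht]
    exact (hVdiff (x t)).hasGradientAt.comp_hasDerivAt (hx t).hasDerivAt
  have hVx_zero := eq_zero_of_hasDerivAt_le_neg_mul_rpow hVx
    (fun t _ => by simp only [Function.comp_apply]; linarith [hdecr (x t)])
    (fun t _ => hV_nonneg (x t)) hc hγ.2
  intro t ht
  by_contra hxt
  exact (hVpos _ hxt).ne' (hVx_zero t ht)

/-- Finite-time stability (Theorem 1): if a differentiable positive definite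
function `V` satisfies `⟪∇V(z), f(z) + g(z)(u(z))⟫ + c (V z)^γ ≤ 0` everywhere,
then every solution of `ẋ = f(x) + g(x) u(x)` reaches the origin within the
settling time `(V (x 0))^(1-γ) / (c (1-γ))` and stays there. -/
theorem finite_time_stability
    (n m : ℕ) (hn : 0 < n) (hm : 0 < m)
    (f : EuclideanSpace ℝ (Fin n) → EuclideanSpace ℝ (Fin n))
    (g : EuclideanSpace ℝ (Fin n) → (EuclideanSpace ℝ (Fin m) →L[ℝ] EuclideanSpace ℝ (Fin n)))
    (u : EuclideanSpace ℝ (Fin n) → EuclideanSpace ℝ (Fin m))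
    (V : EuclideanSpace ℝ (Fin n) → ℝ)
    (hVdiff : Differentiable ℝ V)
    (hV0 : V 0 = 0)
    (hVpos : ∀ z : EuclideanSpace ℝ (Fin n), z ≠ 0 → 0 < V z)
    (c γ : ℝ) (hc : 0 < c) (hγ : γ ∈ Set.Ioo (0 : ℝ) 1)
    (hdecr : ∀ z : EuclideanSpace ℝ (Fin n),
      (inner ℝ (gradient V z) (f z + g z (u z)) : ℝ) + c * (V z) ^ γ ≤ 0)
    (x : ℝ → EuclideanSpace ℝ (Fin n)) (hx : Differentiable ℝ x)
    (hode : ∀ t : ℝ, 0 ≤ t → deriv x t = f (x t) + g (x t) (u (x t))) :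
    ∀ t : ℝ, (V (x 0)) ^ (1 - γ) / (c * (1 - γ)) ≤ t → x t = 0 :=
  finite_time_stability_general n m f g u V hVdiff hV0 hVpos c γ hc hγ hdecr x hx hode
end

section
/- Let c > 0 and γ ∈ (0,1), and let v : ℝ → ℝ be differentiable with v(t) ≥ 0 for all t ≥ 0 and v'(t) ≤ -c·(v(t))^γ for all t ≥ 0. Then v(t) = 0 for all t ≥ (v(0))^{1-γ} / (c(1-γ)). -/
/-! `v` is nonincreasing on `[0, ∞)`, and while it stays positive, `v ^ (1 - γ)` has derivative
`(1 - γ) v ^ (-γ) v' ≤ -c (1 - γ)`; so it would fall below `0` before time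
`v 0 ^ (1 - γ) / (c (1 - γ))` if `v` were still positive then. -/

open Real Set

theorem antitoneOn_rpow_one_sub_add_mul {v v' : ℝ → ℝ} {a b c γ : ℝ} (hγ : γ ≤ 1)
    (hv : ∀ t ∈ Icc a b, HasDerivAt v (v' t) t) (hpos : ∀ t ∈ Icc a b, 0 < v t)
    (hv' : ∀ t ∈ Ioo a b, v' t ≤ -(c * v t ^ γ)) :
    AntitoneOn (fun t => v t ^ (1 - γ) + c * (1 - γ) * t) (Icc a b) := by
  have hderiv : ∀ t ∈ Icc a b, HasDerivAt (fun t => v t ^ (1 - γ) + c * (1 - γ) * t)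
      (v' t * (1 - γ) * v t ^ (-γ) + c * (1 - γ)) t := fun t ht => by
    have h := ((hv t ht).rpow_const (p := 1 - γ) (Or.inl (hpos t ht).ne')).add
      ((hasDerivAt_id t).const_mul (c * (1 - γ)))
    rwa [sub_sub_cancel_left, mul_one] at h
  refine antitoneOn_of_hasDerivWithinAt_nonpos (convex_Icc a b)
    (fun t ht => (hderiv t ht).continuousAt.continuousWithinAt)
    (fun t ht => (hderiv t (interior_subset ht)).hasDerivWithinAt) fun t ht => ?_
  rw [interior_Icc] at ht
  have hvt := hpos t (Ioo_subset_Icc_self ht)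
  have hcancel : v t ^ γ * v t ^ (-γ) = 1 := by
    rw [← rpow_add hvt, add_neg_cancel, rpow_zero]
  have := mul_le_mul_of_nonneg_right (hv' t ht)
    (mul_nonneg (sub_nonneg.2 hγ) (rpow_nonneg hvt.le (-γ)))
  linear_combination this - c * (1 - γ) * hcancel

/-- Scalar finite-time comparison lemma: if `v ≥ 0` and `v' ≤ -c v^γ` on `[0,∞)`
with `c > 0`, `γ ∈ (0,1)`, then `v(t) = 0` for all `t ≥ (v 0)^(1-γ) / (c (1-γ))`. -/
theorem finite_time_scalar_comparison
    (c γ : ℝ) (hc : 0 < c) (hγ : γ ∈ Set.Ioo (0 : ℝ) 1)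
    (v : ℝ → ℝ) (hv : Differentiable ℝ v)
    (hnn : ∀ t : ℝ, 0 ≤ t → 0 ≤ v t)
    (hdecr : ∀ t : ℝ, 0 ≤ t → deriv v t ≤ -(c * (v t) ^ γ)) :
    ∀ t : ℝ, (v 0) ^ (1 - γ) / (c * (1 - γ)) ≤ t → v t = 0 := by
  intro t ht
  have hcγ : 0 < c * (1 - γ) := mul_pos hc (sub_pos.2 hγ.2)
  have ht0 : 0 ≤ t := (div_nonneg (rpow_nonneg (hnn 0 le_rfl) _) hcγ.le).trans ht
  have hanti : AntitoneOn v (Ici 0) :=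
    antitoneOn_of_deriv_nonpos (convex_Ici 0) hv.continuous.continuousOn hv.differentiableOn
      fun s hs => (hdecr s (interior_subset hs)).trans
        (neg_nonpos.2 (mul_nonneg hc.le (rpow_nonneg (hnn s (interior_subset hs)) γ)))
  by_contra hne
  have hpos : ∀ s ∈ Icc 0 t, 0 < v s := fun s hs =>
    ((hnn t ht0).lt_of_ne' hne).trans_le (hanti hs.1 ht0 hs.2)
  have hdrop := antitoneOn_rpow_one_sub_add_mul hγ.2.le (fun s _ => (hv s).hasDerivAt) hpos
    (fun s hs => hdecr s hs.1.le) (left_mem_Icc.2 ht0) (right_mem_Icc.2 ht0) ht0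
  have hT : v 0 ^ (1 - γ) ≤ c * (1 - γ) * t := (div_le_iff₀' hcγ).1 ht
  have hvt : 0 < v t ^ (1 - γ) := rpow_pos_of_pos (hpos t (right_mem_Icc.2 ht0)) _
  simp only [mul_zero, add_zero] at hdrop
  linarith
end

section
/- Let α : ℝ → ℝ be strictly increasing with α(0) = 0, and let y : ℝ → ℝ be differentiable with y'(t) ≥ -α(y(t)) for all t ≥ 0. If y(0) ≥ 0, then y(t) ≥ 0 for all t ≥ 0. -/
/-- Scalar comparison lemma for forward invariance: if `α` is strictly increasing
with `α 0 = 0`, `y` is differentiable with `y' t ≥ -α (y t)` for all `t ≥ 0`, and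
`y 0 ≥ 0`, then `y t ≥ 0` for all `t ≥ 0`. -/
theorem scalar_forward_invariance
    (α : ℝ → ℝ) (hαmono : StrictMono α) (hα0 : α 0 = 0)
    (y : ℝ → ℝ) (hy : Differentiable ℝ y)
    (hineq : ∀ t : ℝ, 0 ≤ t → deriv y t ≥ -α (y t))
    (hinit : y 0 ≥ 0) :
    ∀ t : ℝ, 0 ≤ t → y t ≥ 0 := by
  intro T hT
  by_contra hneg
  push_neg at hneg
  -- set of points in [0,T] where y is nonnegative
  set S : Set ℝ := {t | t ∈ Set.Icc (0:ℝ) T ∧ 0 ≤ y t} with hS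
  have hSne : S.Nonempty := ⟨0, ⟨le_refl 0, hT⟩, hinit⟩
  have hScompact : IsCompact S := by
    have hclosed : IsClosed S := by
      have : S = Set.Icc (0:ℝ) T ∩ y ⁻¹' Set.Ici 0 := by
        ext t; simp [hS, Set.mem_Icc, and_assoc]
      rw [this]
      exact isClosed_Icc.inter (isClosed_Ici.preimage hy.continuous)
    exact (isCompact_Icc.inter_right (isClosed_Ici.preimage hy.continuous)).of_isClosed_subset
      hclosed (by intro t ht; exact ⟨ht.1, ht.2⟩)
  obtain ⟨s, hsS, hsub⟩ := hScompact.exists_isGreatest hSne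
  obtain ⟨⟨hs0, hsT⟩, hys⟩ := hsS
  have hsT' : s < T := by
    rcases lt_or_eq_of_le hsT with h | h
    · exact h
    · exfalso; rw [h] at hys; linarith
  -- on (s, T], y is negative
  have hynegint : ∀ t ∈ Set.Ioo s T, y t < 0 := by
    intro t ⟨ht1, ht2⟩
    by_contra hc
    push_neg at hc
    have : t ∈ S := ⟨⟨le_trans hs0 ht1.le, ht2.le⟩, hc⟩
    exact absurd (hsub this) (not_le.mpr ht1)
  have hmono : StrictMonoOn y (Set.Icc s T) := by
    apply StrictMonoOn.mono (s := Set.Icc s T) ?_ (le_refl _)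
    exact strictMonoOn_of_deriv_pos (convex_Icc s T) hy.continuous.continuousOn
      (by
        intro t ht
        rw [interior_Icc] at ht
        have hyt : y t < 0 := hynegint t ht
        have h1 : α (y t) < 0 := by
          have := hαmono hyt
          rwa [hα0] at this
        have h2 := hineq t (le_trans hs0 ht.1.le)
        linarith)
  have := hmono (Set.left_mem_Icc.mpr hsT'.le) (Set.right_mem_Icc.mpr hsT'.le) hsT'
  linarith
end

section
/- Let n, m be positive integers, let f : ℝⁿ → ℝⁿ, g : ℝⁿ → (ℝᵐ →L[ℝ] ℝⁿ), and u : ℝⁿ → ℝᵐ be arbitrary maps, let h : ℝⁿ → ℝ be differentiable, and let α : ℝ → ℝ be an extended class K function. Suppose that for every z ∈ ℝⁿ, ⟪∇h(z), f(z) + g(z)(u(z))⟫ ≥ -α(h(z)). Then every differentiable curve x : ℝ → ℝⁿ satisfying x'(t) = f(x(t)) + g(x(t))(u(x(t))) for all t ≥ 0 satisfies: for every ε > 0 there exists T ≥ 0 such that h(x(t)) ≥ -ε for all t ≥ T. In particular, the trajectory asymptotically approaches the safe set S = {z ∈ ℝⁿ : h(z) ≥ 0}. -/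
/-!
Along a solution, `y t = h (x t)` satisfies `y' ≥ -α(y)`. Below the level `-ε` this gives
`y' ≥ -α(-ε) > 0`, a uniform rate of increase, so `y` must climb above `-ε` in finite time;
and since `y' > 0` whenever `y = -ε`, it can never fall below that level again.
-/

open scoped InnerProductSpace

theorem HasDerivAt.comp_inner_gradient {F : Type*} [NormedAddCommGroup F]
    [InnerProductSpace ℝ F] [CompleteSpace F] {h : F → ℝ} {x : ℝ → F} {x' : F} {t : ℝ}
    (hh : DifferentiableAt ℝ h (x t)) (hx : HasDerivAt x x' t) :
    HasDerivAt (fun s => h (x s)) ⟪gradient h (x t), x'⟫_ℝ t := by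
  rw [inner_gradient_left]
  exact hh.hasFDerivAt.comp_hasDerivAt t hx

section ScalarBarrier

variable {y y' : ℝ → ℝ} {t₀ a : ℝ}

theorem exists_le_of_le_deriv_on_sublevel {c : ℝ} (hc : 0 < c)
    (hy : ∀ t ≥ t₀, HasDerivAt y (y' t) t) (hy' : ∀ t ≥ t₀, y t < a → c ≤ y' t) :
    ∃ T ≥ t₀, a ≤ y T := by
  by_contra! hlt
  -- While `y < a`, `y` grows at least like `y t₀ + c (t - t₀)`, which reaches `a` at `T`.
  set T := t₀ + (a - y t₀) / c
  have hT : t₀ ≤ T := le_add_of_nonneg_right (div_nonneg (sub_nonneg.2 (hlt t₀ le_rfl).le) hc.le)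
  have hlin : y t₀ + c * (T - t₀) ≤ y T :=
    image_le_of_deriv_right_le_deriv_boundary (f := fun t => y t₀ + c * (t - t₀))
      (by fun_prop)
      (fun t _ => (((hasDerivAt_id t).sub_const t₀).const_mul c).const_add _ |>.hasDerivWithinAt)
      (by simp) (fun t ht => (hy t ht.1).continuousAt.continuousWithinAt)
      (fun t ht => (hy t ht.1).hasDerivWithinAt)
      (fun t ht => by simpa using hy' t ht.1 (hlt t ht.1)) ⟨hT, le_rfl⟩
  have hcT : c * (T - t₀) = a - y t₀ := by
    simp only [T, add_sub_cancel_left]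
    field_simp
  linarith [hlt T hT]

theorem le_of_le_of_deriv_pos_on_level (hy : ∀ t ≥ t₀, HasDerivAt y (y' t) t)
    (hy' : ∀ t ≥ t₀, y t = a → 0 < y' t) (ha : a ≤ y t₀) : ∀ t ≥ t₀, a ≤ y t := fun _ ht =>
  image_le_of_deriv_right_lt_deriv_boundary' (f := fun _ => a) continuousOn_const
    (fun _ _ => hasDerivWithinAt_const _ _ _) ha
    (fun s hs => (hy s hs.1).continuousAt.continuousWithinAt)
    (fun s hs => (hy s hs.1).hasDerivWithinAt) (fun s hs hys => hy' s hs.1 hys.symm)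
    ⟨ht, le_rfl⟩

theorem eventually_le_of_le_deriv_on_sublevel {c : ℝ} (hc : 0 < c)
    (hy : ∀ t ≥ t₀, HasDerivAt y (y' t) t) (hy' : ∀ t ≥ t₀, y t ≤ a → c ≤ y' t) :
    ∃ T ≥ t₀, ∀ t ≥ T, a ≤ y t := by
  obtain ⟨T, hT, hyT⟩ := exists_le_of_le_deriv_on_sublevel hc hy
    fun t ht hyt => hy' t ht hyt.le
  exact ⟨T, hT, le_of_le_of_deriv_pos_on_level (fun t ht => hy t (hT.trans ht))
    (fun t ht hyt => hc.trans_le (hy' t (hT.trans ht) hyt.le)) hyT⟩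

end ScalarBarrier

theorem cbf_asymptotic_stability_general
    (n m : ℕ)
    (f : EuclideanSpace ℝ (Fin n) → EuclideanSpace ℝ (Fin n))
    (g : EuclideanSpace ℝ (Fin n) → (EuclideanSpace ℝ (Fin m) →L[ℝ] EuclideanSpace ℝ (Fin n)))
    (u : EuclideanSpace ℝ (Fin n) → EuclideanSpace ℝ (Fin m))
    (h : EuclideanSpace ℝ (Fin n) → ℝ) (hhdiff : Differentiable ℝ h)
    (α : ℝ → ℝ) (hαmono : StrictMono α) (hα0 : α 0 = 0)
    (hcbf : ∀ z : EuclideanSpace ℝ (Fin n),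
      (inner ℝ (gradient h z) (f z + g z (u z)) : ℝ) ≥ -α (h z))
    (x : ℝ → EuclideanSpace ℝ (Fin n)) (hx : Differentiable ℝ x)
    (hode : ∀ t : ℝ, 0 ≤ t → deriv x t = f (x t) + g (x t) (u (x t))) :
    ∀ ε : ℝ, 0 < ε → ∃ T : ℝ, 0 ≤ T ∧ ∀ t : ℝ, T ≤ t → h (x t) ≥ -ε := by
  intro ε hε
  have hrate : 0 < -α (-ε) := by linarith [hαmono (neg_neg_of_pos hε)]
  have hderiv : ∀ t ≥ (0 : ℝ), HasDerivAt (fun s => h (x s)) ⟪gradient h (x t), deriv x t⟫_ℝ t :=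
    fun t _ => (hx t).hasDerivAt.comp_inner_gradient (hhdiff (x t))
  have hsublevel : ∀ t ≥ (0 : ℝ), h (x t) ≤ -ε → -α (-ε) ≤ ⟪gradient h (x t), deriv x t⟫_ℝ := by
    intro t ht hle
    rw [hode t ht]
    linarith [hcbf (x t), hαmono.monotone hle]
  exact eventually_le_of_le_deriv_on_sublevel hrate hderiv hsublevel

/-- Asymptotic stability of the safe set (Theorem 3): under the control barrier
function condition `⟪∇h(z), f(z) + g(z)(u(z))⟫ ≥ -α(h(z))` with `α` an extended
class K function, every solution of `ẋ = f(x) + g(x) u(x)` asymptotically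
approaches the safe set `S = {z | h z ≥ 0}`: for every `ε > 0` there is `T ≥ 0`
with `h (x t) ≥ -ε` for all `t ≥ T`. -/
theorem cbf_asymptotic_stability
    (n m : ℕ) (hn : 0 < n) (hm : 0 < m)
    (f : EuclideanSpace ℝ (Fin n) → EuclideanSpace ℝ (Fin n))
    (g : EuclideanSpace ℝ (Fin n) → (EuclideanSpace ℝ (Fin m) →L[ℝ] EuclideanSpace ℝ (Fin n)))
    (u : EuclideanSpace ℝ (Fin n) → EuclideanSpace ℝ (Fin m))
    (h : EuclideanSpace ℝ (Fin n) → ℝ) (hhdiff : Differentiable ℝ h)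
    (α : ℝ → ℝ) (hαcont : Continuous α) (hαmono : StrictMono α) (hα0 : α 0 = 0)
    (hcbf : ∀ z : EuclideanSpace ℝ (Fin n),
      (inner ℝ (gradient h z) (f z + g z (u z)) : ℝ) ≥ -α (h z))
    (x : ℝ → EuclideanSpace ℝ (Fin n)) (hx : Differentiable ℝ x)
    (hode : ∀ t : ℝ, 0 ≤ t → deriv x t = f (x t) + g (x t) (u (x t))) :
    ∀ ε : ℝ, 0 < ε → ∃ T : ℝ, 0 ≤ T ∧ ∀ t : ℝ, T ≤ t → h (x t) ≥ -ε :=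
  cbf_asymptotic_stability_general n m f g u h hhdiff α hαmono hα0 hcbf x hx hode
end

section
/- Let n be a positive integer, a ∈ ℝⁿ, and b ∈ ℝ. Set r = max(b, 0) / (1 + ‖a‖²), u* = r • a, and δ* = r. Then (u*, δ*) satisfies the constraint ⟪a, u*⟫ + δ* ≥ b, and for every pair (u, δ) ∈ ℝⁿ × ℝ with ⟪a, u⟫ + δ ≥ b one has ‖u*‖² + (δ*)² ≤ ‖u‖² + δ², with equality if and only if (u, δ) = (u*, δ*). In other words, (u*, δ*) is the unique minimizer of ‖u‖² + δ² subject to ⟪a, u⟫ + δ ≥ b. -/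
open Real

/-!
Completing the square around `(r • a, r)` gives
`‖u‖² + δ² = ‖r • a‖² + r² + (‖u - r • a‖² + (δ - r)²) + 2 r (⟪a, u⟫ + δ - r (1 + ‖a‖²))`.
With `r = max b 0 / (1 + ‖a‖²)` the last term is `2 r (⟪a, u⟫ + δ - max b 0)`, which is
nonnegative on the feasible set (complementary slackness: either `r = 0` or the constraint
is active at `(r • a, r)`), so the energy exceeds that of `(r • a, r)` by at least the squared
distance to it.
-/

section MinEnergy

variable {E : Type*} [NormedAddCommGroup E] [InnerProductSpace ℝ E]

theorem norm_sq_add_sq_eq_of_smul (a u : E) (r δ : ℝ) :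
    ‖u‖ ^ 2 + δ ^ 2 = ‖r • a‖ ^ 2 + r ^ 2 + (‖u - r • a‖ ^ 2 + (δ - r) ^ 2)
      + 2 * r * (inner ℝ a u + δ - r * (1 + ‖a‖ ^ 2)) := by
  rw [norm_sub_sq_real, real_inner_smul_right, real_inner_comm, norm_smul, mul_pow,
    Real.norm_eq_abs, sq_abs]
  ring

theorem norm_sq_add_sq_le_and_eq_iff_of_slack_nonneg {a u : E} {r δ : ℝ}
    (hslack : 0 ≤ r * (inner ℝ a u + δ - r * (1 + ‖a‖ ^ 2))) :
    ‖r • a‖ ^ 2 + r ^ 2 ≤ ‖u‖ ^ 2 + δ ^ 2 ∧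
      (‖r • a‖ ^ 2 + r ^ 2 = ‖u‖ ^ 2 + δ ^ 2 ↔ u = r • a ∧ δ = r) := by
  have hdecomp := norm_sq_add_sq_eq_of_smul a u r δ
  have hu := sq_nonneg ‖u - r • a‖
  have hδ := sq_nonneg (δ - r)
  refine ⟨by linarith, ⟨fun h ↦ ?_, ?_⟩⟩
  · have hu0 : ‖u - r • a‖ ^ 2 = 0 := by linarith
    have hδ0 : (δ - r) ^ 2 = 0 := by linarith
    simp only [ne_eq, OfNat.ofNat_ne_zero, not_false_eq_true, pow_eq_zero_iff, norm_eq_zero,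
      sub_eq_zero] at hu0 hδ0
    exact ⟨hu0, hδ0⟩
  · rintro ⟨rfl, rfl⟩
    rfl

end MinEnergy

theorem max_zero_mul_sub_max_zero_nonneg {b x : ℝ} (h : b ≤ x) :
    0 ≤ max b 0 * (x - max b 0) := by
  rcases le_total b 0 with hb | hb
  · simp [max_eq_right hb]
  · rw [max_eq_left hb]
    exact mul_nonneg hb (sub_nonneg.mpr h)

theorem relaxed_min_energy_qp_solution_general
    (n : ℕ) (a : EuclideanSpace ℝ (Fin n)) (b : ℝ) :
    let r : ℝ := max b 0 / (1 + ‖a‖ ^ 2)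
    let ustar : EuclideanSpace ℝ (Fin n) := r • a
    let δstar : ℝ := r
    ((inner ℝ a ustar : ℝ) + δstar ≥ b) ∧
      ∀ (u : EuclideanSpace ℝ (Fin n)) (δ : ℝ), (inner ℝ a u : ℝ) + δ ≥ b →
        (‖ustar‖ ^ 2 + δstar ^ 2 ≤ ‖u‖ ^ 2 + δ ^ 2 ∧
          (‖ustar‖ ^ 2 + δstar ^ 2 = ‖u‖ ^ 2 + δ ^ 2 ↔ u = ustar ∧ δ = δstar)) := by
  intro r ustar δstar
  have hr : r * (1 + ‖a‖ ^ 2) = max b 0 := div_mul_cancel₀ _ (by positivity)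
  refine ⟨?_, fun u δ hfeas ↦ norm_sq_add_sq_le_and_eq_iff_of_slack_nonneg ?_⟩
  · have hactive : inner ℝ a ustar + δstar = max b 0 := by
      rw [← hr, real_inner_smul_right, real_inner_self_eq_norm_sq]
      ring
    exact hactive ▸ le_max_left b 0
  · rw [hr, div_mul_eq_mul_div]
    exact div_nonneg (max_zero_mul_sub_max_zero_nonneg hfeas) (by positivity)

/-- Closed-form KKT solution of the relaxed minimum-energy QP (Proposition 1):
with `r = max b 0 / (1 + ‖a‖²)`, the pair `(u*, δ*) = (r • a, r)` is feasible for
the constraint `⟪a, u⟫ + δ ≥ b` and is the unique minimizer of `‖u‖² + δ²`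
over all feasible pairs. -/
theorem relaxed_min_energy_qp_solution
    (n : ℕ) (hn : 0 < n) (a : EuclideanSpace ℝ (Fin n)) (b : ℝ) :
    let r : ℝ := max b 0 / (1 + ‖a‖ ^ 2)
    let ustar : EuclideanSpace ℝ (Fin n) := r • a
    let δstar : ℝ := r
    ((inner ℝ a ustar : ℝ) + δstar ≥ b) ∧
      ∀ (u : EuclideanSpace ℝ (Fin n)) (δ : ℝ), (inner ℝ a u : ℝ) + δ ≥ b →
        (‖ustar‖ ^ 2 + δstar ^ 2 ≤ ‖u‖ ^ 2 + δ ^ 2 ∧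
          (‖ustar‖ ^ 2 + δstar ^ 2 = ‖u‖ ^ 2 + δ ^ 2 ↔ u = ustar ∧ δ = δstar)) :=
  relaxed_min_energy_qp_solution_general n a b
end

section
/- Let N and d be positive integers, let G be a simple (hence symmetric) graph on Fin N, and for each edge let φ : Fin N → Fin N → ℝ → ℝ be a family of differentiable functions with φ i j = φ j i for all i, j. For a configuration x : Fin N → ℝᵈ with xᵢ ≠ xⱼ whenever i and j are adjacent in G, define J(x) = ∑ᵢ ∑_{j ∈ neighbors of i} φ i j (‖xᵢ − xⱼ‖) and, for each i, Jᵢ(x) = ∑_{j ∈ neighbors of i} φ i j (‖xᵢ − xⱼ‖). Then for each index i, the gradient with respect to the i-th block of the total cost J equals twice the gradient with respect to the i-th block of the local cost Jᵢ: ∇_{xᵢ} J(x) = 2 · ∇_{xᵢ} Jᵢ(x). -/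
open Finset

private lemma sum_split_erase {α : Type*} [DecidableEq α] (s : Finset α) (a : α) (g : α → ℝ) :
    ∑ j ∈ s, g j = (∑ j ∈ s.erase a, g j) + (if a ∈ s then g a else 0) := by
  by_cases h : a ∈ s
  · rw [if_pos h, Finset.sum_erase_add _ _ h]
  · rw [if_neg h, Finset.erase_eq_of_notMem h, add_zero]

/-- Key step of Proposition 3: for a symmetric pairwise cost
`J(x) = ∑ᵢ ∑_{j ∼ i} φ i j ‖xᵢ - xⱼ‖` on an undirected interaction graph, the
gradient of the total cost with respect to the `i`-th block equals twice the
gradient of the local cost `Jᵢ(x) = ∑_{j ∼ i} φ i j ‖xᵢ - xⱼ‖`. -/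
theorem pairwise_cost_block_gradient
    (N d : ℕ) (hN : 0 < N) (hd : 0 < d)
    (G : SimpleGraph (Fin N)) [DecidableRel G.Adj]
    (φ : Fin N → Fin N → ℝ → ℝ)
    (hφdiff : ∀ i j, Differentiable ℝ (φ i j))
    (hφsym : ∀ i j, φ i j = φ j i)
    (x : Fin N → EuclideanSpace ℝ (Fin d))
    (hx : ∀ i j, G.Adj i j → x i ≠ x j)
    (J : (Fin N → EuclideanSpace ℝ (Fin d)) → ℝ)
    (hJ : ∀ y : Fin N → EuclideanSpace ℝ (Fin d),
      J y = ∑ i, ∑ j ∈ G.neighborFinset i, φ i j ‖y i - y j‖)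
    (Jloc : Fin N → (Fin N → EuclideanSpace ℝ (Fin d)) → ℝ)
    (hJloc : ∀ (i : Fin N) (y : Fin N → EuclideanSpace ℝ (Fin d)),
      Jloc i y = ∑ j ∈ G.neighborFinset i, φ i j ‖y i - y j‖)
    (i : Fin N) :
    gradient (fun z => J (Function.update x i z)) (x i)
      = (2 : ℝ) • gradient (fun z => Jloc i (Function.update x i z)) (x i) := by
  classical
  set f : EuclideanSpace ℝ (Fin d) → ℝ := fun z => ∑ j ∈ G.neighborFinset i, φ i j ‖z - x j‖ with hf
  -- the local cost as a function of the i-th block is f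
  have hloc : (fun z => Jloc i (Function.update x i z)) = f := by
    funext z
    rw [hJloc]
    refine Finset.sum_congr rfl fun j hj => ?_
    have hji : j ≠ i := (G.ne_of_adj (G.mem_neighborFinset i j |>.mp hj)).symm
    rw [Function.update_self, Function.update_of_ne hji]
  set C : ℝ := ∑ k ∈ Finset.univ.erase i, ∑ j ∈ (G.neighborFinset k).erase i,
      φ k j ‖x k - x j‖ with hC
  -- the total cost as a function of the i-th block is 2 * f + C
  have htot : (fun z => J (Function.update x i z)) = fun z => 2 * f z + C := by
    funext z
    rw [hJ]
    rw [← Finset.sum_erase_add _ _ (Finset.mem_univ i)]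
    have hrowi : ∑ j ∈ G.neighborFinset i,
        φ i j ‖Function.update x i z i - Function.update x i z j‖ = f z := by
      refine Finset.sum_congr rfl fun j hj => ?_
      have hji : j ≠ i := (G.ne_of_adj (G.mem_neighborFinset i j |>.mp hj)).symm
      rw [Function.update_self, Function.update_of_ne hji]
    rw [hrowi]
    have hrows : ∑ k ∈ Finset.univ.erase i, ∑ j ∈ G.neighborFinset k,
        φ k j ‖Function.update x i z k - Function.update x i z j‖ = C + f z := by
      have hrow : ∀ k ∈ Finset.univ.erase i,
          (∑ j ∈ G.neighborFinset k,
            φ k j ‖Function.update x i z k - Function.update x i z j‖)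
          = (∑ j ∈ (G.neighborFinset k).erase i, φ k j ‖x k - x j‖)
            + (if i ∈ G.neighborFinset k then φ i k ‖z - x k‖ else 0) := by
        intro k hk
        have hki : k ≠ i := Finset.ne_of_mem_erase hk
        rw [sum_split_erase (G.neighborFinset k) i]
        congr 1
        · refine Finset.sum_congr rfl fun j hj => ?_
          have hji : j ≠ i := Finset.ne_of_mem_erase hj
          rw [Function.update_of_ne hki, Function.update_of_ne hji]
        · by_cases h : i ∈ G.neighborFinset k
          · rw [if_pos h, if_pos h, Function.update_of_ne hki, Function.update_self,
              hφsym k i, norm_sub_rev]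
          · rw [if_neg h, if_neg h]
      rw [Finset.sum_congr rfl hrow, Finset.sum_add_distrib]
      congr 1
      rw [← Finset.sum_filter]
      have hset : (Finset.univ.erase i).filter (fun k => i ∈ G.neighborFinset k)
          = G.neighborFinset i := by
        ext k
        simp only [Finset.mem_filter, Finset.mem_erase, Finset.mem_univ,
          SimpleGraph.mem_neighborFinset, true_and, and_true]
        constructor
        · rintro ⟨-, h⟩; exact h.symm
        · intro h; exact ⟨(G.ne_of_adj h).symm, h.symm⟩
      rw [hset]
    rw [hrows]
    ring
  rw [htot, hloc]
  have hfd : DifferentiableAt ℝ f (x i) := by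
    refine DifferentiableAt.fun_sum fun j hj => ?_
    have hadj : G.Adj i j := (G.mem_neighborFinset i j).mp hj
    exact ((hφdiff i j).differentiableAt).comp (x i)
      (DifferentiableAt.norm ℝ (differentiableAt_id.sub (differentiableAt_const _))
        (sub_ne_zero.mpr (hx i j hadj)))
  have h1 : fderiv ℝ (fun z => 2 * f z + C) (x i) = (2 : ℝ) • fderiv ℝ f (x i) := by
    rw [fderiv_add_const, fderiv_const_mul hfd]
  unfold gradient
  rw [h1, map_smul]
end
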